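/- Let 𝒜 be an m-order n-dimensional strong M-tensor with a_{ii…i} = 1 for all i, let s = k = 1, let α_i, β_j ∈ [0,1], and suppose condition (7) holds. Then there exists a nonzero nonnegative vector x₂ ∈ ℝⁿ (a Perron vector of M(ℰ₅)^{−1}ℱ₅, i.e. (M(ℰ₅)^{−1}ℱ₅)x₂^{m−1} = ρ(M(ℰ₅)^{−1}ℱ₅)x₂^{[m−1]}) such that 𝒜_{αβ}(1,1)x₂^{m−1} ≥ 0 entrywise. -/

import Mathlib

open scoped BigOperators

namespace MultilinearPaper

noncomputable section

/-- An `m`-order `n`-dimensional real tensor: the first index is separated and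
the remaining `m - 1` indices are given as a function `Fin (m-1) → Fin n`. -/
abbrev Tensor (m n : ℕ) : Type := Fin n → (Fin (m - 1) → Fin n) → ℝ

variable {m n : ℕ}

/-- The vector `𝒜 x^{m-1}` (real version):
`(𝒜 x^{m-1})_i = ∑_{i₂,…,i_m} a_{i i₂ … i_m} x_{i₂} ⋯ x_{i_m}`. -/
def tmul (A : Tensor m n) (x : Fin n → ℝ) : Fin n → ℝ :=
  fun i => ∑ f : Fin (m - 1) → Fin n, A i f * ∏ t, x (f t)

/-- The vector `𝒜 x^{m-1}` evaluated at a complex vector. -/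
def tmulC (A : Tensor m n) (x : Fin n → ℂ) : Fin n → ℂ :=
  fun i => ∑ f : Fin (m - 1) → Fin n, (A i f : ℂ) * ∏ t, x (f t)

/-- The identity tensor `𝓘`. -/
def idT (m n : ℕ) : Tensor m n :=
  fun i f => if ∀ t, f t = i then 1 else 0

/-- Entrywise nonnegativity of a tensor. -/
def TNonneg (A : Tensor m n) : Prop := ∀ i f, 0 ≤ A i f

/-- `lam` is an eigenvalue of `A`: there is `x ≠ 0` over `ℂ` with
`𝒜 x^{m-1} = lam • x^{[m-1]}`. -/
def IsEigenvalue (A : Tensor m n) (lam : ℂ) : Prop :=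
  ∃ x : Fin n → ℂ, x ≠ 0 ∧ ∀ i, tmulC A x i = lam * (x i) ^ (m - 1)

/-- Spectral radius: supremum of moduli of eigenvalues. -/
def rho (A : Tensor m n) : ℝ :=
  sSup {r : ℝ | ∃ lam : ℂ, IsEigenvalue A lam ∧ r = ‖lam‖}

/-- `A` is a strong M-tensor: `A = η 𝓘 - B` with `B ≥ 0` and `η > ρ(B)`. -/
def StrongM (A : Tensor m n) : Prop :=
  ∃ (η : ℝ) (B : Tensor m n), TNonneg B ∧ rho B < η ∧ A = η • idT m n - B

/-- Matrix–tensor product `(P𝓑)_{j i₂…i_m} = ∑_{j₂} P_{j j₂} b_{j₂ i₂ … i_m}`. -/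
def mmul (P : Matrix (Fin n) (Fin n) ℝ) (A : Tensor m n) : Tensor m n :=
  fun j f => ∑ j₂, P j j₂ * A j₂ f

/-- Majorization matrix `M(𝒜)_{ij} = a_{i j … j}`. -/
def maj (A : Tensor m n) : Matrix (Fin n) (Fin n) ℝ :=
  fun i j => A i (fun _ => j)

/-- `a_{i i … i} = 1` for all `i`. -/
def UnitDiag (A : Tensor m n) : Prop := ∀ i, A i (fun _ => i) = 1

/-- `L`: the negatives of the strictly lower triangular entries of `M(𝒜)`. -/
def Lmat (A : Tensor m n) : Matrix (Fin n) (Fin n) ℝ :=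
  fun i j => if (j : ℕ) < (i : ℕ) then -maj A i j else 0

/-- `𝓛 = L𝓘`. -/
def Ltens (A : Tensor m n) : Tensor m n := mmul (Lmat A) (idT m n)

/-- `𝓕 = 𝓘 - 𝓛 - 𝒜`. -/
def Ftens (A : Tensor m n) : Tensor m n := idT m n - Ltens A - A

/-- The matrix `S_α^s`, with `(S_α^s)_{i,i+s} = -α_i a_{i(i+s)…(i+s)}`. -/
def Smat (A : Tensor m n) (α : Fin n → ℝ) (s : ℕ) : Matrix (Fin n) (Fin n) ℝ :=
  fun i j => if (j : ℕ) = (i : ℕ) + s then -(α i * maj A i j) else 0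

/-- The matrix `K_β^k`, with `(K_β^k)_{i,i-k} = -β_i a_{i(i-k)…(i-k)}`. -/
def Kmat (A : Tensor m n) (β : Fin n → ℝ) (k : ℕ) : Matrix (Fin n) (Fin n) ℝ :=
  fun i j => if (i : ℕ) = (j : ℕ) + k then -(β i * maj A i j) else 0

/-- The preconditioner `P_{αβ}(s,k) = I + S_α^s + K_β^k`. -/
def Pmat (A : Tensor m n) (α β : Fin n → ℝ) (s k : ℕ) : Matrix (Fin n) (Fin n) ℝ :=
  1 + Smat A α s + Kmat A β k

/-- The preconditioned tensor `𝒜_{αβ}(s,k) = P_{αβ}(s,k) 𝒜`. -/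
def precond (A : Tensor m n) (α β : Fin n → ℝ) (s k : ℕ) : Tensor m n :=
  mmul (Pmat A α β s k) A

/- Jacobi-type splittings. -/

def E1 (A : Tensor m n) (α β : Fin n → ℝ) (s k : ℕ) : Tensor m n :=
  mmul (Pmat A α β s k) (idT m n)

def F1 (A : Tensor m n) (α β : Fin n → ℝ) (s k : ℕ) : Tensor m n :=
  mmul (Pmat A α β s k) (Ltens A + Ftens A)

def F2 (A : Tensor m n) (α β : Fin n → ℝ) (s k : ℕ) : Tensor m n :=
  mmul (Pmat A α β s k) (Ltens A + Ftens A) - mmul (Smat A α s + Kmat A β k) (idT m n)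

def F3 (A : Tensor m n) (α : Fin n → ℝ) (s : ℕ) : Tensor m n :=
  mmul (1 + Smat A α s) (Ltens A + Ftens A) - mmul (Smat A α s) (idT m n)

def F4 (A : Tensor m n) (β : Fin n → ℝ) (k : ℕ) : Tensor m n :=
  mmul (1 + Kmat A β k) (Ltens A + Ftens A) - mmul (Kmat A β k) (idT m n)

/-- `S`: the matrix `S_α^1` with all parameters equal to `1`. -/
def Sfull (A : Tensor m n) : Matrix (Fin n) (Fin n) ℝ := Smat A (fun _ => 1) 1

/-- `K`: the matrix `K_β^1` with all parameters equal to `1`. -/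
def Kfull (A : Tensor m n) : Matrix (Fin n) (Fin n) ℝ := Kmat A (fun _ => 1) 1

/-- `𝓛′` with `𝓛 = K𝓘 + 𝓛′`. -/
def Lprime (A : Tensor m n) : Tensor m n := Ltens A - mmul (Kfull A) (idT m n)

/-- `𝓕′` with `𝓕 = S𝓘 + 𝓕′`. -/
def Fprime (A : Tensor m n) : Tensor m n := Ftens A - mmul (Sfull A) (idT m n)

/-- `ℰ₅ = (I - S_α K - K_β S)𝓘`. -/
def E5 (A : Tensor m n) (α β : Fin n → ℝ) : Tensor m n :=
  mmul (1 - Smat A α 1 * Kfull A - Kmat A β 1 * Sfull A) (idT m n)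

/-- `ℱ₅ = 𝓛 + 𝓕 - (S_α + K_β)𝓘 + S_α(𝓛′ + 𝓕) + K_β(𝓛 + 𝓕′)`. -/
def F5 (A : Tensor m n) (α β : Fin n → ℝ) : Tensor m n :=
  Ltens A + Ftens A - mmul (Smat A α 1 + Kmat A β 1) (idT m n)
    + mmul (Smat A α 1) (Lprime A + Ftens A) + mmul (Kmat A β 1) (Ltens A + Fprime A)

def finShiftUp (i : Fin n) (s : ℕ) (h : (i : ℕ) + s < n) : Fin n := ⟨(i : ℕ) + s, h⟩

def finShiftDown (i : Fin n) (k : ℕ) : Fin n :=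
  ⟨(i : ℕ) - k, lt_of_le_of_lt (Nat.sub_le _ _) i.isLt⟩

/-- The `i`-th quantity appearing in conditions (7) and (11):
`α_i a_{i(i+k)…(i+k)} a_{(i+k)i…i} + β_i a_{i(i-k)…(i-k)} a_{(i-k)i…i}`,
with each term dropped when its index is out of range. -/
def condExpr (A : Tensor m n) (α β : Fin n → ℝ) (k : ℕ) (i : Fin n) : ℝ :=
  (if h : (i : ℕ) + k < n then
      α i * maj A i (finShiftUp i k h) * maj A (finShiftUp i k h) i
    else 0) +
  (if k ≤ (i : ℕ) then
      β i * maj A i (finShiftDown i k) * maj A (finShiftDown i k) i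
    else 0)

/-- Conditions (7) (for `k = 1`) and (11) (for general `k = s`). -/
def Cond (A : Tensor m n) (α β : Fin n → ℝ) (k : ℕ) : Prop :=
  ∀ i : Fin n, 0 < condExpr A α β k i ∧ condExpr A α β k i < 1

/- Gauss–Seidel-type splittings. -/

/-- The diagonal part of `M(T)` as a matrix. -/
def DmatOf (T : Tensor m n) : Matrix (Fin n) (Fin n) ℝ :=
  fun i j => if i = j then maj T i j else 0

/-- The strictly lower triangular part of `M(T)` as a matrix. -/
def LmatOf (T : Tensor m n) : Matrix (Fin n) (Fin n) ℝ :=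
  fun i j => if (j : ℕ) < (i : ℕ) then maj T i j else 0

/-- `𝓓_α = D_α 𝓘` from `S_α^s 𝓛 = 𝓓_α + 𝓛_α + 𝓕_α`. -/
def Dalpha (A : Tensor m n) (α : Fin n → ℝ) (s : ℕ) : Tensor m n :=
  mmul (DmatOf (mmul (Smat A α s) (Ltens A))) (idT m n)

def Lalpha (A : Tensor m n) (α : Fin n → ℝ) (s : ℕ) : Tensor m n :=
  mmul (LmatOf (mmul (Smat A α s) (Ltens A))) (idT m n)

def Falpha (A : Tensor m n) (α : Fin n → ℝ) (s : ℕ) : Tensor m n :=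
  mmul (Smat A α s) (Ltens A) - Dalpha A α s - Lalpha A α s

/-- `𝓓_β = D_β 𝓘` from `K_β^k 𝓕 = 𝓓_β + 𝓛_β + 𝓕_β`. -/
def Dbeta (A : Tensor m n) (β : Fin n → ℝ) (k : ℕ) : Tensor m n :=
  mmul (DmatOf (mmul (Kmat A β k) (Ftens A))) (idT m n)

def Lbeta (A : Tensor m n) (β : Fin n → ℝ) (k : ℕ) : Tensor m n :=
  mmul (LmatOf (mmul (Kmat A β k) (Ftens A))) (idT m n)

def Fbeta (A : Tensor m n) (β : Fin n → ℝ) (k : ℕ) : Tensor m n :=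
  mmul (Kmat A β k) (Ftens A) - Dbeta A β k - Lbeta A β k

def M1 (A : Tensor m n) (α β : Fin n → ℝ) (s k : ℕ) : Tensor m n :=
  mmul (Pmat A α β s k) (idT m n - Ltens A)

def N1 (A : Tensor m n) (α β : Fin n → ℝ) (s k : ℕ) : Tensor m n :=
  mmul (Pmat A α β s k) (Ftens A)

def M2 (A : Tensor m n) (α β : Fin n → ℝ) (s k : ℕ) : Tensor m n :=
  idT m n - Ltens A + mmul (Kmat A β k) (idT m n) - mmul (Kmat A β k) (Ltens A)
    - Dalpha A α s - Lalpha A α s - Dbeta A β k - Lbeta A β k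

def N2 (A : Tensor m n) (α β : Fin n → ℝ) (s k : ℕ) : Tensor m n :=
  Ftens A - mmul (Smat A α s) (idT m n) + mmul (Smat A α s) (Ftens A)
    + Falpha A α s + Fbeta A β k

def M3 (A : Tensor m n) (α : Fin n → ℝ) (s : ℕ) : Tensor m n :=
  idT m n - Ltens A - Dalpha A α s - Lalpha A α s

def N3 (A : Tensor m n) (α : Fin n → ℝ) (s : ℕ) : Tensor m n :=
  Ftens A - mmul (Smat A α s) (idT m n) + mmul (Smat A α s) (Ftens A) + Falpha A α s

def M4 (A : Tensor m n) (β : Fin n → ℝ) (k : ℕ) : Tensor m n :=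
  mmul (1 + Kmat A β k) (idT m n - Ltens A) - Dbeta A β k - Lbeta A β k

def N4 (A : Tensor m n) (β : Fin n → ℝ) (k : ℕ) : Tensor m n :=
  Ftens A + Fbeta A β k

/- Preconditioned SOR. -/

def Dab (A : Tensor m n) (α β : Fin n → ℝ) (s k : ℕ) : Tensor m n :=
  idT m n - Dalpha A α s - Dbeta A β k

def Lab (A : Tensor m n) (α β : Fin n → ℝ) (s k : ℕ) : Tensor m n :=
  Ltens A - mmul (Kmat A β k) (idT m n) + mmul (Kmat A β k) (Ltens A)
    + Lalpha A α s + Lbeta A β k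

def Fab (A : Tensor m n) (α β : Fin n → ℝ) (s k : ℕ) : Tensor m n :=
  Ftens A - mmul (Smat A α s) (idT m n) + mmul (Smat A α s) (Ftens A)
    + Falpha A α s + Fbeta A β k

def Eomega (A : Tensor m n) (α β : Fin n → ℝ) (s k : ℕ) (ω : ℝ) : Tensor m n :=
  (1 / ω) • (Dab A α β s k - ω • Lab A α β s k)

def Fomega (A : Tensor m n) (α β : Fin n → ℝ) (s k : ℕ) (ω : ℝ) : Tensor m n :=
  (1 / ω) • ((1 - ω) • Dab A α β s k + ω • Fab A α β s k)

/-- Preconditioned SOR iteration tensor `ℋ_{αβ}(ω)`. -/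
def Hsor (A : Tensor m n) (α β : Fin n → ℝ) (s k : ℕ) (ω : ℝ) : Tensor m n :=
  mmul (maj (Eomega A α β s k ω))⁻¹ (Fomega A α β s k ω)

/-- Unpreconditioned SOR iteration tensor `ℋ(ω) = M(𝓘-ω𝓛)^{-1}((1-ω)𝓘+ω𝓕)`. -/
def Hu (A : Tensor m n) (ω : ℝ) : Tensor m n :=
  mmul (maj (idT m n - ω • Ltens A))⁻¹ ((1 - ω) • idT m n + ω • Ftens A)

/-- A tensor is reducible if there is a nonempty proper index subset `I` with
`a_{i₁ i₂ … i_m} = 0` whenever `i₁ ∈ I` and `i₂, …, i_m ∉ I`. -/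
def TReducible (A : Tensor m n) : Prop :=
  ∃ I : Set (Fin n), I.Nonempty ∧ I ≠ Set.univ ∧
    ∀ i f, i ∈ I → (∀ t, f t ∉ I) → A i f = 0
section Helpers
variable {m n : ℕ}

lemma tmul_add_t (S T : Tensor m n) (x : Fin n → ℝ) (i : Fin n) :
    tmul (S + T) x i = tmul S x i + tmul T x i := by
  simp [tmul, add_mul, Finset.sum_add_distrib]

lemma tmul_sub_t (S T : Tensor m n) (x : Fin n → ℝ) (i : Fin n) :
    tmul (S - T) x i = tmul S x i - tmul T x i := by
  simp [tmul, sub_mul, Finset.sum_sub_distrib]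

lemma tmul_smul_t (c : ℝ) (T : Tensor m n) (x : Fin n → ℝ) (i : Fin n) :
    tmul (c • T) x i = c * tmul T x i := by
  simp [tmul, Finset.mul_sum, mul_assoc]

lemma tmul_idT_apply (x : Fin n → ℝ) (i : Fin n) :
    tmul (idT m n) x i = x i ^ (m - 1) := by
  classical
  unfold tmul idT
  rw [Finset.sum_eq_single (fun _ => i)]
  · simp [Finset.prod_const]
  · intro f _ hf
    rw [if_neg, zero_mul]
    intro h; exact hf (funext h)
  · simp

lemma tmul_mmul (P : Matrix (Fin n) (Fin n) ℝ) (X : Tensor m n) (x : Fin n → ℝ) (i : Fin n) :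
    tmul (mmul P X) x i = ∑ j, P i j * tmul X x j := by
  unfold tmul mmul
  simp only [Finset.sum_mul, Finset.mul_sum, mul_assoc]
  rw [Finset.sum_comm]

lemma mmul_add (P : Matrix (Fin n) (Fin n) ℝ) (X Y : Tensor m n) :
    mmul P (X + Y) = mmul P X + mmul P Y := by
  funext i f; simp [mmul, mul_add, Finset.sum_add_distrib]

lemma mmul_sub (P : Matrix (Fin n) (Fin n) ℝ) (X Y : Tensor m n) :
    mmul P (X - Y) = mmul P X - mmul P Y := by
  funext i f; simp [mmul, mul_sub, Finset.sum_sub_distrib]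

lemma mmul_addMat (P Q : Matrix (Fin n) (Fin n) ℝ) (X : Tensor m n) :
    mmul (P + Q) X = mmul P X + mmul Q X := by
  funext i f; simp [mmul, add_mul, Finset.sum_add_distrib, Matrix.add_apply]

lemma mmul_subMat (P Q : Matrix (Fin n) (Fin n) ℝ) (X : Tensor m n) :
    mmul (P - Q) X = mmul P X - mmul Q X := by
  funext i f; simp [mmul, sub_mul, Finset.sum_sub_distrib, Matrix.sub_apply]

lemma mmul_oneMat (X : Tensor m n) : mmul 1 X = X := by
  funext i f
  simp [mmul, Matrix.one_apply, Finset.sum_ite_eq]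

lemma mmul_mulMat (P Q : Matrix (Fin n) (Fin n) ℝ) (X : Tensor m n) :
    mmul (P * Q) X = mmul P (mmul Q X) := by
  funext i f
  unfold mmul
  simp only [Matrix.mul_apply, Finset.sum_mul, Finset.mul_sum, mul_assoc]
  rw [Finset.sum_comm]

lemma precond_split (A : Tensor m n) (α β : Fin n → ℝ) :
    precond A α β 1 1 = E5 A α β - F5 A α β := by
  simp only [precond, E5, F5, Pmat, Lprime, Fprime, Ftens]
  simp only [mmul_add, mmul_sub, mmul_addMat, mmul_subMat, mmul_mulMat, mmul_oneMat]
  abel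

lemma continuous_tmul (T : Tensor m n) (i : Fin n) :
    Continuous fun x : Fin n → ℝ => tmul T x i := by
  unfold tmul
  exact continuous_finset_sum _ fun f _ =>
    continuous_const.mul (continuous_finset_prod _ fun t _ => continuous_apply (f t))

lemma tmul_nonneg {T : Tensor m n} (hT : TNonneg T) {x : Fin n → ℝ} (hx : ∀ i, 0 ≤ x i)
    (i : Fin n) : 0 ≤ tmul T x i :=
  Finset.sum_nonneg fun f _ => mul_nonneg (hT i f) (Finset.prod_nonneg fun t _ => hx _)

lemma tmul_mono {T : Tensor m n} (hT : TNonneg T) {x y : Fin n → ℝ} (hx : ∀ i, 0 ≤ x i)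
    (hxy : ∀ i, x i ≤ y i) (i : Fin n) : tmul T x i ≤ tmul T y i :=
  Finset.sum_le_sum fun f _ => mul_le_mul_of_nonneg_left
    (Finset.prod_le_prod (fun t _ => hx _) (fun t _ => hxy _)) (hT i f)

lemma tmul_smul_vec (T : Tensor m n) (c : ℝ) (x : Fin n → ℝ) (i : Fin n) :
    tmul T (c • x) i = c ^ (m - 1) * tmul T x i := by
  unfold tmul
  rw [Finset.mul_sum]
  refine Finset.sum_congr rfl fun f _ => ?_
  simp only [Pi.smul_apply, smul_eq_mul]
  rw [Finset.prod_mul_distrib, Finset.prod_const]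
  simp [Finset.card_univ]
  ring

end Helpers
section PF
variable {m n : ℕ}

lemma tmulC_ofReal (T : Tensor m n) (x : Fin n → ℝ) (i : Fin n) :
    tmulC T (fun j => (x j : ℂ)) i = ((tmul T x i : ℝ) : ℂ) := by
  unfold tmulC tmul
  push_cast
  rfl

lemma isEigenvalue_of_real {T : Tensor m n} {lam : ℝ} {x : Fin n → ℝ} (hx : x ≠ 0)
    (h : ∀ i, tmul T x i = lam * x i ^ (m - 1)) : IsEigenvalue T (lam : ℂ) := by
  refine ⟨fun j => (x j : ℂ), ?_, fun i => ?_⟩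
  · intro hc
    apply hx
    funext j
    have := congrFun hc j
    simpa using this
  · rw [tmulC_ofReal, h i]
    push_cast
    ring

lemma collatz {T : Tensor m n} (hT : TNonneg T) {z : Fin n → ℝ} (hz : ∀ i, 0 < z i)
    {γ : ℝ} (hγ : ∀ i, tmul T z i ≤ γ * z i ^ (m - 1)) {lam : ℂ}
    (hlam : IsEigenvalue T lam) : ‖lam‖ ≤ γ := by
  classical
  obtain ⟨y, hy0, hy⟩ := hlam
  obtain ⟨j, hj⟩ : ∃ j, y j ≠ 0 := by
    by_contra hc
    push_neg at hc
    exact hy0 (funext hc)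
  obtain ⟨i₀, -, hmax⟩ := Finset.exists_max_image Finset.univ
    (fun i => ‖y i‖ / z i) ⟨j, Finset.mem_univ j⟩
  set t := ‖y i₀‖ / z i₀ with ht
  have htpos : 0 < t := lt_of_lt_of_le (div_pos (by simpa using hj) (hz j)) (hmax j (Finset.mem_univ j))
  have habs : ∀ l, ‖y l‖ ≤ t * z l := fun l => by
    have h := hmax l (Finset.mem_univ l)
    have : ‖y l‖ = (‖y l‖ / z l) * z l := by
      rw [div_mul_cancel₀ _ (ne_of_gt (hz l))]
    rw [this]
    exact mul_le_mul_of_nonneg_right h (le_of_lt (hz l))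
  have hyi : ‖y i₀‖ = t * z i₀ := by
    rw [ht, div_mul_cancel₀ _ (ne_of_gt (hz i₀))]
  have key : ‖lam‖ * (t * z i₀) ^ (m - 1) ≤ γ * (t * z i₀) ^ (m - 1) := by
    have h1 : ‖lam‖ * (t * z i₀) ^ (m - 1) = ‖tmulC T y i₀‖ := by
      rw [hy i₀, norm_mul, norm_pow, hyi]
    rw [h1]
    have h2 : ‖tmulC T y i₀‖ ≤
        ∑ f : Fin (m - 1) → Fin n, T i₀ f * ∏ s, (t * z (f s)) := by
      unfold tmulC
      refine le_trans (norm_sum_le _ _) (Finset.sum_le_sum fun f _ => ?_)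
      rw [norm_mul, norm_prod, Complex.norm_real, Real.norm_eq_abs, abs_of_nonneg (hT i₀ f)]
      exact mul_le_mul_of_nonneg_left
        (Finset.prod_le_prod (fun s _ => (norm_nonneg _)) (fun s _ => habs _)) (hT i₀ f)
    calc ‖tmulC T y i₀‖
        ≤ ∑ f : Fin (m - 1) → Fin n, T i₀ f * ∏ s, (t * z (f s)) := h2
      _ = t ^ (m - 1) * tmul T z i₀ := by
          unfold tmul
          rw [Finset.mul_sum]
          refine Finset.sum_congr rfl fun f _ => ?_
          rw [Finset.prod_mul_distrib, Finset.prod_const]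
          simp [Finset.card_univ]
          ring
      _ ≤ t ^ (m - 1) * (γ * z i₀ ^ (m - 1)) :=
          mul_le_mul_of_nonneg_left (hγ i₀) (pow_nonneg htpos.le _)
      _ = γ * (t * z i₀) ^ (m - 1) := by rw [mul_pow]; ring
  have hpow : 0 < (t * z i₀) ^ (m - 1) := pow_pos (mul_pos htpos (hz i₀)) _
  exact le_of_mul_le_mul_right key hpow

end PF
section PosEigen
variable {m n : ℕ}

lemma xi_le_one {x : Fin n → ℝ} (hx0 : ∀ i, 0 ≤ x i) (hsum : ∑ i, x i = 1) (i : Fin n) :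
    x i ≤ 1 := by
  rw [← hsum]
  exact Finset.single_le_sum (fun j _ => hx0 j) (Finset.mem_univ i)

lemma feas_bound (hp : 1 ≤ m - 1) {T' : Tensor m n} {x : Fin n → ℝ} {r : ℝ}
    (hx0 : ∀ i, 0 ≤ x i) (hsum : ∑ i, x i = 1) (hr : 0 ≤ r)
    (h : ∀ i, r * x i ^ (m - 1) ≤ tmul T' x i)
    {Mb : ℝ} (hT0 : ∀ i f, 0 ≤ T' i f) (hMb : ∀ i f, T' i f ≤ Mb) :
    r ≤ (n : ℝ) ^ (m - 1) * ((n : ℝ) ^ (m - 1) * Mb) := by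
  classical
  have hn : 0 < n := by
    by_contra hc
    push_neg at hc
    interval_cases n
    simp at hsum
  obtain ⟨imax, -, himax⟩ := Finset.exists_max_image Finset.univ x
    ⟨⟨0, hn⟩, Finset.mem_univ _⟩
  have h1n : (1 : ℝ) ≤ (n : ℝ) * x imax := by
    calc (1 : ℝ) = ∑ i, x i := hsum.symm
      _ ≤ ∑ _i : Fin n, x imax := Finset.sum_le_sum fun i _ => himax i (Finset.mem_univ i)
      _ = (n : ℝ) * x imax := by simp [Finset.sum_const, Finset.card_univ, mul_comm]
  have htb : tmul T' x imax ≤ (n : ℝ) ^ (m - 1) * Mb := by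
    have hcard : (Fintype.card (Fin (m - 1) → Fin n) : ℝ) = (n : ℝ) ^ (m - 1) := by
      simp [Fintype.card_fun]
    calc tmul T' x imax ≤ ∑ _f : Fin (m - 1) → Fin n, Mb := by
          refine Finset.sum_le_sum fun f _ => ?_
          calc T' imax f * ∏ t, x (f t) ≤ T' imax f * 1 := by
                refine mul_le_mul_of_nonneg_left ?_ (hT0 _ _)
                exact Finset.prod_le_one (fun t _ => hx0 _) (fun t _ => xi_le_one hx0 hsum _)
            _ = T' imax f := mul_one _
            _ ≤ Mb := hMb _ _
      _ = (n : ℝ) ^ (m - 1) * Mb := by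
          rw [Finset.sum_const, Finset.card_univ, nsmul_eq_mul, hcard]
  calc r = r * 1 := (mul_one r).symm
    _ ≤ r * ((n : ℝ) * x imax) ^ (m - 1) := by
        refine mul_le_mul_of_nonneg_left (one_le_pow₀ h1n) hr
    _ = (n : ℝ) ^ (m - 1) * (r * x imax ^ (m - 1)) := by rw [mul_pow]; ring
    _ ≤ (n : ℝ) ^ (m - 1) * tmul T' x imax := by
        refine mul_le_mul_of_nonneg_left (h imax) (by positivity)
    _ ≤ (n : ℝ) ^ (m - 1) * ((n : ℝ) ^ (m - 1) * Mb) := by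
        refine mul_le_mul_of_nonneg_left htb (by positivity)

lemma pos_eigen (hp : 1 ≤ m - 1) (hn : 0 < n) (T : Tensor m n) (hT : ∀ i f, 0 < T i f) :
    ∃ (lam : ℝ) (x : Fin n → ℝ), 0 ≤ lam ∧ (∀ i, 0 < x i) ∧ (∑ i, x i) = 1 ∧
      ∀ i, tmul T x i = lam * x i ^ (m - 1) := by
  classical
  have hp0 : m - 1 ≠ 0 := by omega
  set Mb : ℝ := ∑ i, ∑ f : Fin (m - 1) → Fin n, T i f with hMbdef
  have hMb : ∀ i f, T i f ≤ Mb := by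
    intro i f
    calc T i f ≤ ∑ f : Fin (m - 1) → Fin n, T i f :=
          Finset.single_le_sum (fun g _ => (hT i g).le) (Finset.mem_univ f)
      _ ≤ Mb := Finset.single_le_sum
          (fun j _ => Finset.sum_nonneg fun g _ => (hT j g).le) (Finset.mem_univ i)
  set C : ℝ := (n : ℝ) ^ (m - 1) * ((n : ℝ) ^ (m - 1) * Mb) with hCdef
  set K : Set (ℝ × (Fin n → ℝ)) := {q | 0 ≤ q.1 ∧ (∀ i, 0 ≤ q.2 i) ∧ (∑ i, q.2 i) = 1 ∧
      ∀ i, q.1 * q.2 i ^ (m - 1) ≤ tmul T q.2 i} with hKdef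
  have hKclosed : IsClosed K := by
    have h1 : IsClosed {q : ℝ × (Fin n → ℝ) | 0 ≤ q.1} :=
      isClosed_le continuous_const continuous_fst
    have h2 : IsClosed {q : ℝ × (Fin n → ℝ) | ∀ i, 0 ≤ q.2 i} := by
      have he : {q : ℝ × (Fin n → ℝ) | ∀ i, 0 ≤ q.2 i} = ⋂ i, {q | 0 ≤ q.2 i} := by
        ext q; simp
      rw [he]
      exact isClosed_iInter fun i =>
        isClosed_le continuous_const ((continuous_apply i).comp continuous_snd)
    have h3 : IsClosed {q : ℝ × (Fin n → ℝ) | (∑ i, q.2 i) = 1} := by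
      refine isClosed_eq ?_ continuous_const
      exact continuous_finset_sum _ fun i _ => (continuous_apply i).comp continuous_snd
    have h4 : IsClosed {q : ℝ × (Fin n → ℝ) | ∀ i, q.1 * q.2 i ^ (m - 1) ≤ tmul T q.2 i} := by
      have he : {q : ℝ × (Fin n → ℝ) | ∀ i, q.1 * q.2 i ^ (m - 1) ≤ tmul T q.2 i} =
          ⋂ i, {q | q.1 * q.2 i ^ (m - 1) ≤ tmul T q.2 i} := by
        ext q; simp
      rw [he]
      refine isClosed_iInter fun i => isClosed_le ?_ ?_
      · exact continuous_fst.mul (((continuous_apply i).comp continuous_snd).pow _)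
      · exact (continuous_tmul T i).comp continuous_snd
    have he : K = {q : ℝ × (Fin n → ℝ) | 0 ≤ q.1} ∩ ({q | ∀ i, 0 ≤ q.2 i} ∩
        ({q | (∑ i, q.2 i) = 1} ∩ {q | ∀ i, q.1 * q.2 i ^ (m - 1) ≤ tmul T q.2 i})) := by
      ext q
      simp only [hKdef, Set.mem_setOf_eq, Set.mem_inter_iff]
      try tauto
    rw [he]
    exact h1.inter (h2.inter (h3.inter h4))
  have hsub : K ⊆ Set.Icc (0 : ℝ) C ×ˢ Set.Icc (0 : Fin n → ℝ) 1 := by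
    rintro ⟨r, x⟩ ⟨hr0, hx0, hxsum, hineq⟩
    constructor
    · exact ⟨hr0, feas_bound hp hx0 hxsum hr0 hineq (fun i f => (hT i f).le) hMb⟩
    · exact ⟨fun i => hx0 i, fun i => xi_le_one hx0 hxsum i⟩
  have hKcomp : IsCompact K :=
    IsCompact.of_isClosed_subset (isCompact_Icc.prod isCompact_Icc) hKclosed hsub
  have hKne : K.Nonempty := by
    refine ⟨(0, fun _ => (n : ℝ)⁻¹), ?_, fun i => by positivity, ?_, fun i => ?_⟩
    · exact le_refl 0
    · simp [Finset.sum_const, Finset.card_univ]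
      rw [mul_inv_cancel₀ (by positivity : (n : ℝ) ≠ 0)]
    · rw [zero_mul]
      exact tmul_nonneg (fun i f => (hT i f).le) (fun i => by positivity) i
  obtain ⟨qm, hqK, hqmax⟩ := hKcomp.exists_isMaxOn hKne continuous_fst.continuousOn
  obtain ⟨hr0, hx0, hxsum, hineq⟩ := hqK
  set r := qm.1 with hrdef
  set x := qm.2 with hxdef
  have heq : ∀ i, r * x i ^ (m - 1) = tmul T x i := by
    by_contra hc
    push_neg at hc
    obtain ⟨i₀, hi₀⟩ := hc
    have hlt : r * x i₀ ^ (m - 1) < tmul T x i₀ := lt_of_le_of_ne (hineq i₀) hi₀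
    have hcont : Filter.Tendsto (fun ε : ℝ => r * (x i₀ + ε) ^ (m - 1)) (nhds 0)
        (nhds (r * (x i₀ + 0) ^ (m - 1))) := by
      exact ((continuous_const.mul ((continuous_const.add continuous_id).pow _)).tendsto 0)
    rw [add_zero] at hcont
    have hev : ∀ᶠ ε : ℝ in nhds 0, r * (x i₀ + ε) ^ (m - 1) < tmul T x i₀ :=
      hcont.eventually_lt_const hlt
    obtain ⟨δ, hδ, hball⟩ := Metric.eventually_nhds_iff.mp hev
    set ε := δ / 2 with hεdef
    have hε : 0 < ε := by positivity
    have hεlt : r * (x i₀ + ε) ^ (m - 1) < tmul T x i₀ := by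
      refine hball ?_
      rw [Real.dist_eq, sub_zero, abs_of_pos hε]
      linarith
    set y : Fin n → ℝ := fun j => x j + (if j = i₀ then ε else 0) with hydef
    have hyx : ∀ j, x j ≤ y j := fun j =>
      le_add_of_nonneg_right (by split <;> simp [hε.le])
    have hy0 : ∀ j, 0 ≤ y j := fun j => le_trans (hx0 j) (hyx j)
    have hyi₀ : y i₀ = x i₀ + ε := by simp [hydef]
    have hyne : ∀ j, j ≠ i₀ → y j = x j := by
      intro j hj; simp [hydef, hj]
    have hsumy : ∑ j, y j = 1 + ε := by
      simp only [hydef]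
      rw [Finset.sum_add_distrib, hxsum, Finset.sum_ite_eq' Finset.univ i₀ (fun _ => ε)]
      simp
    have hTlt : ∀ i, tmul T x i < tmul T y i := by
      intro i
      refine Finset.sum_lt_sum (fun f _ => mul_le_mul_of_nonneg_left
        (Finset.prod_le_prod (fun t _ => hx0 _) (fun t _ => hyx _)) (hT i f).le)
        ⟨fun _ => i₀, Finset.mem_univ _, ?_⟩
      have hprod : (∏ _t : Fin (m - 1), x i₀) < ∏ _t : Fin (m - 1), y i₀ := by
        rw [Finset.prod_const, Finset.prod_const, hyi₀, Finset.card_univ, Fintype.card_fin]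
        exact pow_lt_pow_left₀ (lt_add_of_pos_right _ hε) (hx0 i₀) hp0
      exact mul_lt_mul_of_pos_left hprod (hT i _)
    set s : Finset (Fin n) := Finset.univ.filter (fun i => 0 < y i) with hsdef
    have hsne : s.Nonempty := by
      refine ⟨i₀, ?_⟩
      simp only [hsdef, Finset.mem_filter, Finset.mem_univ, true_and, hyi₀]
      exact add_pos_of_nonneg_of_pos (hx0 i₀) hε
    set r' := s.inf' hsne (fun i => tmul T y i / y i ^ (m - 1)) with hr'def
    have hrr' : r < r' := by
      rw [hr'def, Finset.lt_inf'_iff]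
      intro i hi
      have hyipos : 0 < y i := (Finset.mem_filter.mp hi).2
      rw [lt_div_iff₀ (pow_pos hyipos _)]
      by_cases hii : i = i₀
      · subst hii
        rw [hyi₀]
        exact lt_trans hεlt (hTlt i)
      · rw [hyne i hii]
        exact lt_of_le_of_lt (hineq i) (hTlt i)
    have hfeas' : ∀ i, r' * y i ^ (m - 1) ≤ tmul T y i := by
      intro i
      by_cases h0 : 0 < y i
      · have hi : i ∈ s := by simp [hsdef, h0]
        have := Finset.inf'_le (fun i => tmul T y i / y i ^ (m - 1)) hi
        rw [← hr'def] at this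
        exact (le_div_iff₀ (pow_pos h0 _)).mp this
      · have hyz : y i = 0 := le_antisymm (not_lt.mp h0) (hy0 i)
        rw [hyz, zero_pow hp0, mul_zero]
        exact tmul_nonneg (fun i f => (hT i f).le) hy0 i
    have hσ : (0 : ℝ) < 1 + ε := by linarith
    have hmem : ((r', (1 + ε)⁻¹ • y) : ℝ × (Fin n → ℝ)) ∈ K := by
      refine ⟨le_trans hr0 hrr'.le, fun i => ?_, ?_, fun i => ?_⟩
      · simp only [Pi.smul_apply, smul_eq_mul]
        exact mul_nonneg (by positivity) (hy0 i)
      · simp only [Pi.smul_apply, smul_eq_mul]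
        rw [← Finset.mul_sum, hsumy, inv_mul_cancel₀ (ne_of_gt hσ)]
      · rw [tmul_smul_vec]
        have : ((1 + ε)⁻¹ • y) i ^ (m - 1) = ((1 + ε)⁻¹) ^ (m - 1) * y i ^ (m - 1) := by
          simp only [Pi.smul_apply, smul_eq_mul]
          rw [mul_pow]
        rw [this]
        calc r' * ((1 + ε)⁻¹ ^ (m - 1) * y i ^ (m - 1))
            = (1 + ε)⁻¹ ^ (m - 1) * (r' * y i ^ (m - 1)) := by ring
          _ ≤ (1 + ε)⁻¹ ^ (m - 1) * tmul T y i := by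
              refine mul_le_mul_of_nonneg_left (hfeas' i) (by positivity)
    have := hqmax hmem
    simp only at this
    exact absurd hrr' (not_lt.mpr this)
  have hxpos : ∀ i, 0 < x i := by
    intro i₁
    rcases lt_or_eq_of_le (hx0 i₁) with h | h
    · exact h
    · exfalso
      obtain ⟨j, hj⟩ : ∃ j, 0 < x j := by
        by_contra hc
        push_neg at hc
        have hz : ∑ i, x i = 0 := Finset.sum_eq_zero fun i _ => le_antisymm (hc i) (hx0 i)
        rw [hxsum] at hz
        norm_num at hz
      have hpos : 0 < tmul T x i₁ := by
        refine Finset.sum_pos'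
          (fun f _ => mul_nonneg (hT _ _).le (Finset.prod_nonneg fun t _ => hx0 _))
          ⟨fun _ => j, Finset.mem_univ _, mul_pos (hT _ _) (Finset.prod_pos fun t _ => hj)⟩
      rw [← heq i₁, ← h, zero_pow hp0, mul_zero] at hpos
      exact lt_irrefl 0 hpos
  exact ⟨r, x, hr0, hxpos, hxsum, fun i => (heq i).symm⟩

end PosEigen
section PFmain
variable {m n : ℕ}

lemma pf_nonneg (hp : 1 ≤ m - 1) (hn : 0 < n) (T : Tensor m n) (hT : TNonneg T) :
    ∃ (lam : ℝ) (x : Fin n → ℝ), rho T = lam ∧ 0 ≤ lam ∧ (∀ i, 0 ≤ x i) ∧ (∑ i, x i) = 1 ∧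
      (∀ i, tmul T x i = lam * x i ^ (m - 1)) ∧
      ∀ δ : ℝ, 0 < δ → ∃ z : Fin n → ℝ, (∀ i, 0 < z i) ∧
        ∀ i, tmul T z i ≤ (lam + δ) * z i ^ (m - 1) := by
  classical
  have hp0 : m - 1 ≠ 0 := by omega
  set One : Tensor m n := fun _ _ => (1 : ℝ) with hOne
  set Tk : ℕ → Tensor m n := fun k => T + (1 / (k + 1 : ℝ)) • One with hTk
  have hTkpos : ∀ k i f, 0 < Tk k i f := by
    intro k i f
    have h1 : (0:ℝ) < 1 / (k + 1 : ℝ) := by positivity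
    simp only [hTk, hOne, Pi.add_apply, Pi.smul_apply, smul_eq_mul, mul_one]
    exact add_pos_of_nonneg_of_pos (hT i f) h1
  have htmulTk : ∀ k (x : Fin n → ℝ) i,
      tmul (Tk k) x i = tmul T x i + (1 / (k + 1 : ℝ)) * tmul One x i := by
    intro k x i
    rw [hTk]
    simp only []
    rw [tmul_add_t, tmul_smul_t]
  have hOneNonneg : ∀ (x : Fin n → ℝ), (∀ i, 0 ≤ x i) → ∀ i, 0 ≤ tmul One x i := by
    intro x hx i
    exact tmul_nonneg (fun _ _ => zero_le_one) hx i
  choose lam xs hlam0 hxpos hxsum heig using fun k => pos_eigen hp hn (Tk k) (hTkpos k)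
  set Mb : ℝ := (∑ i, ∑ f : Fin (m - 1) → Fin n, T i f) + 1 with hMbdef
  have hMb : ∀ k i f, Tk k i f ≤ Mb := by
    intro k i f
    have h1 : T i f ≤ ∑ i, ∑ f : Fin (m - 1) → Fin n, T i f := by
      calc T i f ≤ ∑ f : Fin (m - 1) → Fin n, T i f :=
            Finset.single_le_sum (fun g _ => hT i g) (Finset.mem_univ f)
        _ ≤ _ := Finset.single_le_sum
            (fun j _ => Finset.sum_nonneg fun g _ => hT j g) (Finset.mem_univ i)
    have h2 : (1 : ℝ) / (k + 1 : ℝ) ≤ 1 := by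
      rw [div_le_one (by positivity)]
      have : (0:ℝ) ≤ (k:ℝ) := Nat.cast_nonneg k
      linarith
    simp only [hTk, hOne, Pi.add_apply, Pi.smul_apply, smul_eq_mul, mul_one]
    exact add_le_add h1 h2
  set C : ℝ := (n : ℝ) ^ (m - 1) * ((n : ℝ) ^ (m - 1) * Mb) with hCdef
  have hC : ∀ k, lam k ≤ C := by
    intro k
    exact feas_bound hp (fun i => (hxpos k i).le) (hxsum k) (hlam0 k)
      (fun i => (heig k i).symm.le) (fun i f => (hTkpos k i f).le) (hMb k)
  set S : Set ((Fin n → ℝ) × ℝ) := Set.Icc (0 : Fin n → ℝ) 1 ×ˢ Set.Icc (0 : ℝ) C with hSdef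
  have hScomp : IsCompact S := isCompact_Icc.prod isCompact_Icc
  set u : ℕ → (Fin n → ℝ) × ℝ := fun k => (xs k, lam k) with hu_def
  have hu : ∀ k, u k ∈ S := by
    intro k
    refine ⟨⟨fun i => (hxpos k i).le, fun i => xi_le_one (fun j => (hxpos k j).le) (hxsum k) i⟩,
      hlam0 k, hC k⟩
  obtain ⟨a, haS, φ, hφ, htend⟩ := hScomp.tendsto_subseq hu
  set x₀ := a.1 with hx₀def
  set lam₀ := a.2 with hlam₀def
  have htx : Filter.Tendsto (fun k => xs (φ k)) Filter.atTop (nhds x₀) :=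
    (continuous_fst.tendsto a).comp htend
  have htl : Filter.Tendsto (fun k => lam (φ k)) Filter.atTop (nhds lam₀) :=
    (continuous_snd.tendsto a).comp htend
  have htxi : ∀ i, Filter.Tendsto (fun k => xs (φ k) i) Filter.atTop (nhds (x₀ i)) :=
    fun i => ((continuous_apply i).tendsto x₀).comp htx
  have hlam₀0 : 0 ≤ lam₀ := ge_of_tendsto' htl (fun k => hlam0 (φ k))
  have hx₀0 : ∀ i, 0 ≤ x₀ i := fun i => ge_of_tendsto' (htxi i) (fun k => (hxpos (φ k) i).le)
  have hx₀sum : ∑ i, x₀ i = 1 := by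
    have h1 : Filter.Tendsto (fun k => ∑ i, xs (φ k) i) Filter.atTop (nhds (∑ i, x₀ i)) :=
      tendsto_finset_sum _ fun i _ => htxi i
    have h2 : (fun k => ∑ i, xs (φ k) i) = fun _ => (1 : ℝ) := funext fun k => hxsum (φ k)
    rw [h2] at h1
    exact tendsto_nhds_unique h1 tendsto_const_nhds
  have hone_div : Filter.Tendsto (fun k => 1 / ((φ k : ℝ) + 1)) Filter.atTop (nhds 0) :=
    tendsto_one_div_add_atTop_nhds_zero_nat.comp hφ.tendsto_atTop
  have heig₀ : ∀ i, tmul T x₀ i = lam₀ * x₀ i ^ (m - 1) := by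
    intro i
    have hA : Filter.Tendsto
        (fun k => tmul T (xs (φ k)) i + (1 / ((φ k : ℝ) + 1)) * tmul One (xs (φ k)) i)
        Filter.atTop (nhds (tmul T x₀ i + 0 * tmul One x₀ i)) := by
      refine Filter.Tendsto.add (((continuous_tmul T i).tendsto x₀).comp htx) ?_
      exact Filter.Tendsto.mul hone_div (((continuous_tmul One i).tendsto x₀).comp htx)
    have hB : Filter.Tendsto (fun k => lam (φ k) * (xs (φ k) i) ^ (m - 1))
        Filter.atTop (nhds (lam₀ * x₀ i ^ (m - 1))) := htl.mul ((htxi i).pow _)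
    have hfe : (fun k => tmul T (xs (φ k)) i + (1 / ((φ k : ℝ) + 1)) * tmul One (xs (φ k)) i)
        = fun k => lam (φ k) * (xs (φ k) i) ^ (m - 1) := by
      funext k
      rw [← htmulTk (φ k) (xs (φ k)) i, heig (φ k) i]
    rw [hfe] at hA
    have := tendsto_nhds_unique hA hB
    rw [zero_mul, add_zero] at this
    exact this
  have hx₀ne : x₀ ≠ 0 := by
    intro hc
    rw [hc] at hx₀sum
    simp at hx₀sum
  have hub : ∀ (lamC : ℂ), IsEigenvalue T lamC → ∀ k, ‖lamC‖ ≤ lam (φ k) := by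
    intro lamC hE k
    refine collatz hT (hxpos (φ k)) (fun i => ?_) hE
    calc tmul T (xs (φ k)) i
        ≤ tmul T (xs (φ k)) i + (1 / ((φ k : ℝ) + 1)) * tmul One (xs (φ k)) i := by
          have := hOneNonneg (xs (φ k)) (fun j => (hxpos (φ k) j).le) i
          have h2 : (0:ℝ) ≤ 1 / ((φ k : ℝ) + 1) := by positivity
          nlinarith
      _ = lam (φ k) * xs (φ k) i ^ (m - 1) := by
          rw [← htmulTk (φ k) (xs (φ k)) i, heig (φ k) i]
  have hmem : lam₀ ∈ {r : ℝ | ∃ lamC : ℂ, IsEigenvalue T lamC ∧ r = ‖lamC‖} := by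
    refine ⟨(lam₀ : ℂ), isEigenvalue_of_real hx₀ne heig₀, ?_⟩
    rw [Complex.norm_real, Real.norm_eq_abs, abs_of_nonneg hlam₀0]
  have hub' : ∀ r ∈ {r : ℝ | ∃ lamC : ℂ, IsEigenvalue T lamC ∧ r = ‖lamC‖},
      r ≤ lam₀ := by
    rintro r ⟨lamC, hE, rfl⟩
    exact ge_of_tendsto' htl (fun k => hub lamC hE k)
  have hrho : rho T = lam₀ := by
    unfold rho
    exact le_antisymm (csSup_le ⟨lam₀, hmem⟩ hub') (le_csSup ⟨lam₀, fun r hr => hub' r hr⟩ hmem)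
  refine ⟨lam₀, x₀, hrho, hlam₀0, hx₀0, hx₀sum, heig₀, ?_⟩
  intro δ hδ
  have hev : ∀ᶠ k in Filter.atTop, lam (φ k) < lam₀ + δ :=
    htl.eventually_lt_const (by linarith)
  obtain ⟨k, hk⟩ := hev.exists
  refine ⟨xs (φ k), hxpos (φ k), fun i => ?_⟩
  calc tmul T (xs (φ k)) i ≤ lam (φ k) * xs (φ k) i ^ (m - 1) := by
        calc tmul T (xs (φ k)) i
            ≤ tmul T (xs (φ k)) i + (1 / ((φ k : ℝ) + 1)) * tmul One (xs (φ k)) i := by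
              have := hOneNonneg (xs (φ k)) (fun j => (hxpos (φ k) j).le) i
              have h2 : (0:ℝ) ≤ 1 / ((φ k : ℝ) + 1) := by positivity
              nlinarith
          _ = lam (φ k) * xs (φ k) i ^ (m - 1) := by
              rw [← htmulTk (φ k) (xs (φ k)) i, heig (φ k) i]
    _ ≤ (lam₀ + δ) * xs (φ k) i ^ (m - 1) :=
        mul_le_mul_of_nonneg_right hk.le (pow_nonneg (hxpos (φ k) i).le _)

end PFmain
section Entries
variable {m n : ℕ}

lemma mmul_Smat_apply (A : Tensor m n) (α : Fin n → ℝ) (X : Tensor m n) (i : Fin n)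
    (f : Fin (m - 1) → Fin n) :
    mmul (Smat A α 1) X i f =
      if h : (i : ℕ) + 1 < n then
        -(α i * maj A i (finShiftUp i 1 h)) * X (finShiftUp i 1 h) f else 0 := by
  unfold mmul Smat
  split
  case isTrue h =>
    rw [Finset.sum_eq_single (finShiftUp i 1 h)]
    · have hc : ((finShiftUp i 1 h : Fin n) : ℕ) = (i : ℕ) + 1 := rfl
      rw [if_pos hc]
    · intro b _ hb
      rw [if_neg, zero_mul]
      intro hc
      exact hb (Fin.ext hc)
    · simp
  case isFalse h =>
    refine Finset.sum_eq_zero fun b _ => ?_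
    rw [if_neg, zero_mul]
    intro hc
    exact h (hc ▸ b.isLt)

lemma mmul_Kmat_apply (A : Tensor m n) (β : Fin n → ℝ) (X : Tensor m n) (i : Fin n)
    (f : Fin (m - 1) → Fin n) :
    mmul (Kmat A β 1) X i f =
      if 1 ≤ (i : ℕ) then
        -(β i * maj A i (finShiftDown i 1)) * X (finShiftDown i 1) f else 0 := by
  unfold mmul Kmat
  split
  case isTrue h =>
    rw [Finset.sum_eq_single (finShiftDown i 1)]
    · rw [if_pos]
      show (i : ℕ) = (i : ℕ) - 1 + 1
      omega
    · intro b _ hb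
      rw [if_neg, zero_mul]
      intro hc
      refine hb (Fin.ext ?_)
      show (b : ℕ) = (i : ℕ) - 1
      omega
    · simp
  case isFalse h =>
    refine Finset.sum_eq_zero fun b _ => ?_
    rw [if_neg, zero_mul]
    intro hc
    exact h (by omega)

lemma Smat_mulMat_apply (A : Tensor m n) (α : Fin n → ℝ) (M : Matrix (Fin n) (Fin n) ℝ)
    (i j : Fin n) :
    (Smat A α 1 * M) i j =
      if h : (i : ℕ) + 1 < n then
        -(α i * maj A i (finShiftUp i 1 h)) * M (finShiftUp i 1 h) j else 0 := by
  rw [Matrix.mul_apply]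
  unfold Smat
  split
  case isTrue h =>
    rw [Finset.sum_eq_single (finShiftUp i 1 h)]
    · have hc : ((finShiftUp i 1 h : Fin n) : ℕ) = (i : ℕ) + 1 := rfl
      rw [if_pos hc]
    · intro b _ hb
      rw [if_neg, zero_mul]
      intro hc
      exact hb (Fin.ext hc)
    · simp
  case isFalse h =>
    refine Finset.sum_eq_zero fun b _ => ?_
    rw [if_neg, zero_mul]
    intro hc
    exact h (hc ▸ b.isLt)

lemma Kmat_mulMat_apply (A : Tensor m n) (β : Fin n → ℝ) (M : Matrix (Fin n) (Fin n) ℝ)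
    (i j : Fin n) :
    (Kmat A β 1 * M) i j =
      if 1 ≤ (i : ℕ) then
        -(β i * maj A i (finShiftDown i 1)) * M (finShiftDown i 1) j else 0 := by
  rw [Matrix.mul_apply]
  unfold Kmat
  split
  case isTrue h =>
    rw [Finset.sum_eq_single (finShiftDown i 1)]
    · rw [if_pos]
      show (i : ℕ) = (i : ℕ) - 1 + 1
      omega
    · intro b _ hb
      rw [if_neg, zero_mul]
      intro hc
      refine hb (Fin.ext ?_)
      show (b : ℕ) = (i : ℕ) - 1
      omega
    · simp
  case isFalse h =>
    refine Finset.sum_eq_zero fun b _ => ?_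
    rw [if_neg, zero_mul]
    intro hc
    exact h (by omega)

lemma idT_const (hp : 1 ≤ m - 1) (j₂ j : Fin n) :
    idT m n j₂ (fun _ => j) = if j = j₂ then 1 else 0 := by
  unfold idT
  by_cases h : j = j₂
  · rw [if_pos (fun _ => h), if_pos h]
  · rw [if_neg, if_neg h]
    intro hc
    exact h (hc ⟨0, hp⟩)

lemma Mmat_eq (A : Tensor m n) (α β : Fin n → ℝ) :
    (1 - Smat A α 1 * Kfull A - Kmat A β 1 * Sfull A) =
      Matrix.diagonal (fun i => 1 - condExpr A α β 1 i) := by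
  ext i j
  rw [Matrix.sub_apply, Matrix.sub_apply]
  unfold Kfull Sfull
  rw [Smat_mulMat_apply, Kmat_mulMat_apply]
  by_cases hij : i = j
  · subst hij
    rw [Matrix.diagonal_apply_eq, Matrix.one_apply_eq]
    have hSK : (if h : (i : ℕ) + 1 < n then
        -(α i * maj A i (finShiftUp i 1 h)) * Kmat A (fun _ => 1) 1 (finShiftUp i 1 h) i
        else 0) = (if h : (i : ℕ) + 1 < n then
        α i * maj A i (finShiftUp i 1 h) * maj A (finShiftUp i 1 h) i else 0) := by
      by_cases h : (i : ℕ) + 1 < n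
      · rw [dif_pos h, dif_pos h]
        unfold Kmat
        have hc : ((finShiftUp i 1 h : Fin n) : ℕ) = (i : ℕ) + 1 := rfl
        rw [if_pos hc]
        ring
      · rw [dif_neg h, dif_neg h]
    have hKS : (if 1 ≤ (i : ℕ) then
        -(β i * maj A i (finShiftDown i 1)) * Smat A (fun _ => 1) 1 (finShiftDown i 1) i
        else 0) = (if 1 ≤ (i : ℕ) then
        β i * maj A i (finShiftDown i 1) * maj A (finShiftDown i 1) i else 0) := by
      by_cases h : 1 ≤ (i : ℕ)
      · rw [if_pos h, if_pos h]
        unfold Smat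
        have hc : (i : ℕ) = ((finShiftDown i 1 : Fin n) : ℕ) + 1 := by
          show (i : ℕ) = (i : ℕ) - 1 + 1
          omega
        rw [if_pos hc]
        ring
      · rw [if_neg h, if_neg h]
    rw [hSK, hKS]
    unfold condExpr
    ring
  · rw [Matrix.diagonal_apply_ne _ hij, Matrix.one_apply_ne hij]
    have h1 : (if h : (i : ℕ) + 1 < n then
        -(α i * maj A i (finShiftUp i 1 h)) * Kmat A (fun _ => 1) 1 (finShiftUp i 1 h) j
        else 0) = 0 := by
      split
      case isTrue h =>
        unfold Kmat
        rw [if_neg, mul_zero]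
        show ¬((finShiftUp i 1 h : Fin n) : ℕ) = (j : ℕ) + 1
        show ¬((i : ℕ) + 1 = (j : ℕ) + 1)
        intro hc
        exact hij (Fin.ext (by omega))
      case isFalse h => rfl
    have h2 : (if 1 ≤ (i : ℕ) then
        -(β i * maj A i (finShiftDown i 1)) * Smat A (fun _ => 1) 1 (finShiftDown i 1) j
        else 0) = 0 := by
      split
      case isTrue h =>
        unfold Smat
        rw [if_neg, mul_zero]
        show ¬((j : ℕ) = ((finShiftDown i 1 : Fin n) : ℕ) + 1)
        show ¬((j : ℕ) = (i : ℕ) - 1 + 1)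
        intro hc
        exact hij (Fin.ext (by omega))
      case isFalse h => rfl
    rw [h1, h2]
    ring

lemma maj_E5 (hp : 1 ≤ m - 1) (A : Tensor m n) (α β : Fin n → ℝ) :
    maj (E5 A α β) = Matrix.diagonal (fun i => 1 - condExpr A α β 1 i) := by
  rw [← Mmat_eq A α β]
  ext i j
  show mmul _ (idT m n) i (fun _ => j) = _
  unfold mmul
  calc (∑ j₂, (1 - Smat A α 1 * Kfull A - Kmat A β 1 * Sfull A) i j₂ *
        idT m n j₂ (fun _ => j))
      = ∑ j₂, (if j = j₂ then (1 - Smat A α 1 * Kfull A - Kmat A β 1 * Sfull A) i j₂ else 0) := by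
        refine Finset.sum_congr rfl fun j₂ _ => ?_
        rw [idT_const hp]
        split <;> simp
    _ = _ := by rw [Finset.sum_ite_eq Finset.univ j]; simp

lemma diag_inv (d : Fin n → ℝ) (hd : ∀ i, d i ≠ 0) :
    (Matrix.diagonal d)⁻¹ = Matrix.diagonal (fun i => (d i)⁻¹) := by
  refine Matrix.inv_eq_right_inv ?_
  rw [Matrix.diagonal_mul_diagonal]
  have he : (fun i => d i * (d i)⁻¹) = fun _ => (1 : ℝ) :=
    funext fun i => mul_inv_cancel₀ (hd i)
  rw [he, Matrix.diagonal_one]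

lemma mmul_diagonal_apply (d : Fin n → ℝ) (X : Tensor m n) (i : Fin n)
    (f : Fin (m - 1) → Fin n) :
    mmul (Matrix.diagonal d) X i f = d i * X i f := by
  unfold mmul
  rw [Finset.sum_eq_single i]
  · rw [Matrix.diagonal_apply_eq]
  · intro b _ hb
    rw [Matrix.diagonal_apply_ne _ (Ne.symm hb), zero_mul]
  · simp

end Entries
section F5sign
variable {m n : ℕ}

lemma A_offdiag_nonpos {A : Tensor m n} (hA : StrongM A) (i : Fin n)
    (f : Fin (m - 1) → Fin n) (hf : ¬∀ t, f t = i) : A i f ≤ 0 := by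
  obtain ⟨η, B, hB, -, hAeq⟩ := hA
  have he : A i f = η * idT m n i f - B i f := by
    rw [hAeq]
    simp [Pi.sub_apply, Pi.smul_apply]
  rw [he]
  unfold idT
  rw [if_neg hf]
  have := hB i f
  simp
  linarith

lemma maj_nonpos (hp : 1 ≤ m - 1) {A : Tensor m n} (hA : StrongM A) {i j : Fin n}
    (hij : j ≠ i) : maj A i j ≤ 0 := by
  refine A_offdiag_nonpos hA i _ ?_
  intro hc
  exact hij (hc ⟨0, hp⟩)

lemma N_nonneg {A : Tensor m n} (hA : StrongM A) (hdiag : UnitDiag A) (i : Fin n)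
    (f : Fin (m - 1) → Fin n) : 0 ≤ (idT m n - A) i f := by
  show 0 ≤ idT m n i f - A i f
  by_cases hf : ∀ t, f t = i
  · have hfe : f = fun _ => i := funext hf
    rw [hfe]
    unfold idT
    rw [if_pos (fun _ => rfl), hdiag i]
    norm_num
  · unfold idT
    rw [if_neg hf]
    have := A_offdiag_nonpos hA i f hf
    linarith

lemma N_const (hp : 1 ≤ m - 1) (A : Tensor m n) {i j : Fin n} (hij : j ≠ i) :
    (idT m n - A) i (fun _ => j) = -(maj A i j) := by
  show idT m n i (fun _ => j) - A i (fun _ => j) = _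
  unfold idT maj
  rw [if_neg]
  · ring
  · intro hc
    exact hij (hc ⟨0, hp⟩)

lemma F5_nonneg (hp : 1 ≤ m - 1) (A : Tensor m n) (hA : StrongM A) (hdiag : UnitDiag A)
    (α β : Fin n → ℝ)
    (hα : ∀ i : Fin n, (i : ℕ) + 1 < n → α i ∈ Set.Icc (0 : ℝ) 1)
    (hβ : ∀ i : Fin n, 1 ≤ (i : ℕ) → β i ∈ Set.Icc (0 : ℝ) 1) :
    TNonneg (F5 A α β) := by
  have hF5 : F5 A α β =
      ((idT m n - A) - mmul (Smat A α 1) (idT m n) - mmul (Kmat A β 1) (idT m n))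
      + mmul (Smat A α 1) ((idT m n - A) - mmul (Kmat A (fun _ => 1) 1) (idT m n))
      + mmul (Kmat A β 1) ((idT m n - A) - mmul (Smat A (fun _ => 1) 1) (idT m n)) := by
    simp only [F5, Ftens, Lprime, Fprime, Kfull, Sfull, mmul_add, mmul_sub, mmul_addMat]
    abel
  intro i f
  have h1 : 0 ≤ ((idT m n - A) - mmul (Smat A α 1) (idT m n) - mmul (Kmat A β 1) (idT m n)) i f := by
    show 0 ≤ (idT m n - A) i f - mmul (Smat A α 1) (idT m n) i f - mmul (Kmat A β 1) (idT m n) i f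
    rw [mmul_Smat_apply, mmul_Kmat_apply]
    by_cases hup : (i : ℕ) + 1 < n
    · rw [dif_pos hup]
      set u := finShiftUp i 1 hup with hu
      have huv : (u : ℕ) = (i : ℕ) + 1 := rfl
      have hui : u ≠ i := by
        intro hc
        have := congrArg Fin.val hc
        omega
      by_cases hdn : 1 ≤ (i : ℕ)
      · rw [if_pos hdn]
        set v := finShiftDown i 1 with hv
        have hvv : (v : ℕ) = (i : ℕ) - 1 := rfl
        have hvi : v ≠ i := by
          intro hc
          have := congrArg Fin.val hc
          omega
        have huvne : u ≠ v := by
          intro hc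
          have := congrArg Fin.val hc
          omega
        by_cases hfu : ∀ t, f t = u
        · have hfe : f = fun _ => u := funext hfu
          rw [hfe, N_const hp A hui]
          have hiu : idT m n u (fun _ => u) = 1 := by
            unfold idT; rw [if_pos (fun _ => rfl)]
          have hiv : idT m n v (fun _ => u) = 0 := by
            unfold idT
            rw [if_neg]
            intro hc
            exact huvne (hc ⟨0, hp⟩)
          rw [hiu, hiv]
          have hm := maj_nonpos hp hA hui
          have ha := hα i hup
          nlinarith [mul_nonneg (sub_nonneg.mpr ha.2) (neg_nonneg.mpr hm)]
        · have hiu : idT m n u f = 0 := by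
            unfold idT; rw [if_neg hfu]
          by_cases hfv : ∀ t, f t = v
          · have hfe : f = fun _ => v := funext hfv
            rw [hfe] at hiu ⊢
            rw [N_const hp A hvi]
            have hiv : idT m n v (fun _ => v) = 1 := by
              unfold idT; rw [if_pos (fun _ => rfl)]
            rw [hiu, hiv]
            have hm := maj_nonpos hp hA hvi
            have hb := hβ i hdn
            nlinarith [mul_nonneg (sub_nonneg.mpr hb.2) (neg_nonneg.mpr hm)]
          · have hiv : idT m n v f = 0 := by
              unfold idT; rw [if_neg hfv]
            rw [hiu, hiv]
            have := N_nonneg hA hdiag i f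
            simp only [Pi.sub_apply] at this
            simp
            linarith
      · rw [if_neg hdn]
        by_cases hfu : ∀ t, f t = u
        · have hfe : f = fun _ => u := funext hfu
          rw [hfe, N_const hp A hui]
          have hiu : idT m n u (fun _ => u) = 1 := by
            unfold idT; rw [if_pos (fun _ => rfl)]
          rw [hiu]
          have hm := maj_nonpos hp hA hui
          have ha := hα i hup
          nlinarith [mul_nonneg (sub_nonneg.mpr ha.2) (neg_nonneg.mpr hm)]
        · have hiu : idT m n u f = 0 := by
            unfold idT; rw [if_neg hfu]
          rw [hiu]
          have := N_nonneg hA hdiag i f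
          simp only [Pi.sub_apply] at this
          simp
          linarith
    · rw [dif_neg hup]
      by_cases hdn : 1 ≤ (i : ℕ)
      · rw [if_pos hdn]
        set v := finShiftDown i 1 with hv
        have hvi : v ≠ i := by
          intro hc
          have := congrArg Fin.val hc
          show False
          have hvv : (v : ℕ) = (i : ℕ) - 1 := rfl
          omega
        by_cases hfv : ∀ t, f t = v
        · have hfe : f = fun _ => v := funext hfv
          rw [hfe, N_const hp A hvi]
          have hiv : idT m n v (fun _ => v) = 1 := by
            unfold idT; rw [if_pos (fun _ => rfl)]
          rw [hiv]
          have hm := maj_nonpos hp hA hvi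
          have hb := hβ i hdn
          nlinarith [mul_nonneg (sub_nonneg.mpr hb.2) (neg_nonneg.mpr hm)]
        · have hiv : idT m n v f = 0 := by
            unfold idT; rw [if_neg hfv]
          rw [hiv]
          have := N_nonneg hA hdiag i f
          simp only [Pi.sub_apply] at this
          simp
          linarith
      · rw [if_neg hdn]
        have := N_nonneg hA hdiag i f
        simp only [Pi.sub_apply] at this
        simp
        linarith
  have h2 : 0 ≤ mmul (Smat A α 1) ((idT m n - A) - mmul (Kmat A (fun _ => 1) 1) (idT m n)) i f := by
    rw [mmul_Smat_apply]
    split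
    case isTrue hup =>
      set u := finShiftUp i 1 hup with hu
      have huv : (u : ℕ) = (i : ℕ) + 1 := rfl
      have hui : u ≠ i := by
        intro hc
        have := congrArg Fin.val hc
        omega
      refine mul_nonneg ?_ ?_
      · have hm := maj_nonpos hp hA hui
        have ha := hα i hup
        nlinarith [ha.1]
      · show 0 ≤ (idT m n - A) u f - mmul (Kmat A (fun _ => 1) 1) (idT m n) u f
        rw [mmul_Kmat_apply]
        rw [if_pos (show 1 ≤ (u : ℕ) by omega)]
        have hfd : finShiftDown u 1 = i := by
          refine Fin.ext ?_
          show (u : ℕ) - 1 = (i : ℕ)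
          omega
        rw [hfd]
        by_cases hfi : ∀ t, f t = i
        · have hfe : f = fun _ => i := funext hfi
          rw [hfe, N_const hp A (Ne.symm hui)]
          have hii : idT m n i (fun _ => i) = 1 := by
            unfold idT; rw [if_pos (fun _ => rfl)]
          rw [hii]
          ring_nf
          exact le_refl 0
        · have hii : idT m n i f = 0 := by
            unfold idT; rw [if_neg hfi]
          rw [hii]
          have := N_nonneg hA hdiag u f
          simp only [Pi.sub_apply] at this
          simp
          linarith
    case isFalse hup => exact le_refl 0
  have h3 : 0 ≤ mmul (Kmat A β 1) ((idT m n - A) - mmul (Smat A (fun _ => 1) 1) (idT m n)) i f := by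
    rw [mmul_Kmat_apply]
    split
    case isTrue hdn =>
      set v := finShiftDown i 1 with hv
      have hvv : (v : ℕ) = (i : ℕ) - 1 := rfl
      have hvi : v ≠ i := by
        intro hc
        have := congrArg Fin.val hc
        omega
      refine mul_nonneg ?_ ?_
      · have hm := maj_nonpos hp hA hvi
        have hb := hβ i hdn
        nlinarith [hb.1]
      · show 0 ≤ (idT m n - A) v f - mmul (Smat A (fun _ => 1) 1) (idT m n) v f
        rw [mmul_Smat_apply]
        rw [dif_pos (show (v : ℕ) + 1 < n by omega)]
        have hfu : finShiftUp v 1 (show (v : ℕ) + 1 < n by omega) = i := by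
          refine Fin.ext ?_
          show (v : ℕ) + 1 = (i : ℕ)
          omega
        rw [hfu]
        by_cases hfi : ∀ t, f t = i
        · have hfe : f = fun _ => i := funext hfi
          rw [hfe, N_const hp A (Ne.symm hvi)]
          have hii : idT m n i (fun _ => i) = 1 := by
            unfold idT; rw [if_pos (fun _ => rfl)]
          rw [hii]
          ring_nf
          exact le_refl 0
        · have hii : idT m n i f = 0 := by
            unfold idT; rw [if_neg hfi]
          rw [hii]
          have := N_nonneg hA hdiag v f
          simp only [Pi.sub_apply] at this
          simp
          linarith
    case isFalse hdn => exact le_refl 0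
  rw [hF5]
  exact add_nonneg (add_nonneg h1 h2) h3

end F5sign
section Assembly
variable {m n : ℕ}

lemma tmul_mmul_diag (d : Fin n → ℝ) (X : Tensor m n) (z : Fin n → ℝ) (i : Fin n) :
    tmul (mmul (Matrix.diagonal d) X) z i = d i * tmul X z i := by
  unfold tmul
  rw [Finset.mul_sum]
  refine Finset.sum_congr rfl fun f _ => ?_
  rw [mmul_diagonal_apply, mul_assoc]

end Assembly

theorem stmt5 {m n : ℕ} (hm : 2 ≤ m) (hn : 2 ≤ n)
    (A : Tensor m n) (hA : StrongM A) (hdiag : UnitDiag A)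
    (α β : Fin n → ℝ)
    (hα : ∀ i : Fin n, (i : ℕ) + 1 < n → α i ∈ Set.Icc (0 : ℝ) 1)
    (hβ : ∀ i : Fin n, 1 ≤ (i : ℕ) → β i ∈ Set.Icc (0 : ℝ) 1)
    (hcond : Cond A α β 1) :
    ∃ x₂ : Fin n → ℝ, x₂ ≠ 0 ∧ (∀ i, 0 ≤ x₂ i) ∧
      (∀ i, tmul (mmul (maj (E5 A α β))⁻¹ (F5 A α β)) x₂ i
          = rho (mmul (maj (E5 A α β))⁻¹ (F5 A α β)) * x₂ i ^ (m - 1)) ∧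
      (∀ i, 0 ≤ tmul (precond A α β 1 1) x₂ i) := by
  have hp : 1 ≤ m - 1 := by omega
  have hn0 : 0 < n := by omega
  set d : Fin n → ℝ := fun i => 1 - condExpr A α β 1 i with hd_def
  have hd0 : ∀ i, 0 < d i := by
    intro i
    have := (hcond i).2
    simp only [hd_def]
    linarith
  have hdne : ∀ i, d i ≠ 0 := fun i => ne_of_gt (hd0 i)
  have hmaj : maj (E5 A α β) = Matrix.diagonal d := maj_E5 hp A α β
  have hinv : (maj (E5 A α β))⁻¹ = Matrix.diagonal (fun i => (d i)⁻¹) := by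
    rw [hmaj, diag_inv d hdne]
  set T := mmul (Matrix.diagonal (fun i => (d i)⁻¹)) (F5 A α β) with hTdef
  have hTre : mmul (maj (E5 A α β))⁻¹ (F5 A α β) = T := by rw [hinv]
  have hF5n := F5_nonneg hp A hA hdiag α β hα hβ
  have hTn : TNonneg T := by
    intro i f
    rw [hTdef, mmul_diagonal_apply]
    exact mul_nonneg (inv_nonneg.mpr (hd0 i).le) (hF5n i f)
  obtain ⟨lam, x₀, hrho, hlam0, hx0, hsum, heig, -⟩ := pf_nonneg hp hn0 T hTn
  have hx0ne : x₀ ≠ 0 := by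
    intro hc
    rw [hc] at hsum
    simp at hsum
  -- a strictly positive vector z with A z^{m-1} > 0
  obtain ⟨η, B, hB0, hρB, hAeq⟩ := hA
  obtain ⟨lamB, xB, hrhoB, hlamB0, -, -, -, hδB⟩ := pf_nonneg hp hn0 B hB0
  have hlamBη : lamB < η := by rw [← hrhoB]; exact hρB
  obtain ⟨z, hzpos, hz⟩ := hδB ((η - lamB) / 2) (by linarith)
  have hAz : ∀ i, 0 < tmul A z i := by
    intro i
    have h1 : tmul A z i = η * z i ^ (m - 1) - tmul B z i := by
      rw [hAeq, tmul_sub_t, tmul_smul_t, tmul_idT_apply]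
    rw [h1]
    have h2 := hz i
    have h3 : 0 < z i ^ (m - 1) := pow_pos (hzpos i) _
    nlinarith
  have hA' : StrongM A := ⟨η, B, hB0, hρB, hAeq⟩
  -- P has nonnegative entries, diagonal 1
  have hPnn : ∀ i j, 0 ≤ Pmat A α β 1 1 i j := by
    intro i j
    show 0 ≤ (1 + Smat A α 1 + Kmat A β 1) i j
    rw [Matrix.add_apply, Matrix.add_apply]
    have hS : 0 ≤ Smat A α 1 i j := by
      unfold Smat
      split
      case isTrue h =>
        have hjn : (j : ℕ) < n := j.isLt
        have hij : j ≠ i := by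
          intro hc
          have := congrArg Fin.val hc
          omega
        have ha := hα i (by omega)
        have hm' := maj_nonpos hp hA' hij
        nlinarith [ha.1]
      case isFalse h => exact le_refl 0
    have hK : 0 ≤ Kmat A β 1 i j := by
      unfold Kmat
      split
      case isTrue h =>
        have hij : j ≠ i := by
          intro hc
          have := congrArg Fin.val hc
          omega
        have hb := hβ i (by omega)
        have hm' := maj_nonpos hp hA' hij
        nlinarith [hb.1]
      case isFalse h => exact le_refl 0
    have h1 : (0 : ℝ) ≤ (1 : Matrix (Fin n) (Fin n) ℝ) i j := by
      rw [Matrix.one_apply]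
      split <;> norm_num
    linarith
  have hPz : ∀ i, 0 < tmul (precond A α β 1 1) z i := by
    intro i
    unfold precond
    rw [tmul_mmul]
    refine Finset.sum_pos' (fun j _ => mul_nonneg (hPnn i j) (hAz j).le)
      ⟨i, Finset.mem_univ i, ?_⟩
    have hd1 : Pmat A α β 1 1 i i = 1 := by
      show (1 + Smat A α 1 + Kmat A β 1) i i = 1
      rw [Matrix.add_apply, Matrix.add_apply, Matrix.one_apply_eq]
      unfold Smat Kmat
      rw [if_neg (by omega), if_neg (by omega)]
      norm_num
    rw [hd1, one_mul]
    exact hAz i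
  -- identities for tmul of E5 and F5
  have hE5d : E5 A α β = mmul (Matrix.diagonal d) (idT m n) := by
    unfold E5
    rw [Mmat_eq]
  have hF5T : mmul (Matrix.diagonal d) T = F5 A α β := by
    rw [hTdef, ← mmul_mulMat, Matrix.diagonal_mul_diagonal]
    have he : (fun i => d i * (d i)⁻¹) = fun _ => (1 : ℝ) :=
      funext fun i => mul_inv_cancel₀ (hdne i)
    rw [he, Matrix.diagonal_one, mmul_oneMat]
  have hsplit : ∀ (w : Fin n → ℝ) i, tmul (precond A α β 1 1) w i
      = d i * (w i ^ (m - 1) - tmul T w i) := by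
    intro w i
    rw [precond_split, tmul_sub_t, hE5d, ← hF5T, tmul_mmul_diag, tmul_mmul_diag,
      tmul_idT_apply]
    ring
  have hTz : ∀ i, tmul T z i < z i ^ (m - 1) := by
    intro i
    have h1 := hPz i
    rw [hsplit z i] at h1
    nlinarith [hd0 i]
  have hune : (Finset.univ : Finset (Fin n)).Nonempty := ⟨⟨0, hn0⟩, Finset.mem_univ _⟩
  set γ : ℝ := Finset.univ.sup' hune (fun i => tmul T z i / z i ^ (m - 1)) with hγdef
  have hγ1 : γ < 1 := by
    rw [hγdef, Finset.sup'_lt_iff]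
    intro i _
    rw [div_lt_one (pow_pos (hzpos i) _)]
    exact hTz i
  have hγge : ∀ i, tmul T z i ≤ γ * z i ^ (m - 1) := by
    intro i
    have h1 : tmul T z i / z i ^ (m - 1) ≤ γ :=
      Finset.le_sup' (fun i => tmul T z i / z i ^ (m - 1)) (Finset.mem_univ i)
    exact (div_le_iff₀ (pow_pos (hzpos i) _)).mp h1
  have hlamγ : lam ≤ γ := by
    have hEig := isEigenvalue_of_real hx0ne heig
    have := collatz hTn hzpos hγge hEig
    rwa [Complex.norm_real, Real.norm_eq_abs, abs_of_nonneg hlam0] at this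
  have hlam1 : lam < 1 := lt_of_le_of_lt hlamγ hγ1
  refine ⟨x₀, hx0ne, hx0, fun i => ?_, fun i => ?_⟩
  · rw [hTre, hrho]
    exact heig i
  · rw [hsplit x₀ i, heig i]
    have h1 : 0 ≤ x₀ i ^ (m - 1) := pow_nonneg (hx0 i) _
    have h2 : d i * (x₀ i ^ (m - 1) - lam * x₀ i ^ (m - 1))
        = d i * (1 - lam) * x₀ i ^ (m - 1) := by ring
    rw [h2]
    exact mul_nonneg (mul_nonneg (hd0 i).le (by linarith)) h1
end
end MultilinearPaper
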